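/- Let N ≥ 1, τ > 0, h > 0, k_p > 0, β₁ > 0, β₃ > 0, β₁β₂ − β₃ > 0, and let k_v satisfy condition (h3), i.e. k_v > (√((1 − k_p h²)² + 4 k_p h τ) − (1 + k_p h²))/(2h) when h < τ, and k_v > 0 when h ≥ τ. Then every eigenvalue of the 6N×6N real matrix Ψ has negative real part. -/
import Mathlib


open Matrix

/-- The matrix `𝒜`. -/
noncomputable def matA (τ h kp kv : ℝ) : Matrix (Fin 3) (Fin 3) ℝ :=
  !![0, 1, -h;
     0, 0, -1;
     kp / τ, kv / τ, -(1 + kv * h) / τ]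

/-- The matrix `ℬ` (only nonzero entry: `(2,3)` entry equal to `1`). -/
def matB : Matrix (Fin 3) (Fin 3) ℝ :=
  !![0, 0, 0;
     0, 0, 1;
     0, 0, 0]

/-- The observer matrix `ℋ`. -/
def matH (β₁ β₂ β₃ : ℝ) : Matrix (Fin 3) (Fin 3) ℝ :=
  !![-β₁, 1, 0;
     -β₂, 0, 1;
     -β₃, 0, 0]

/-- The matrix `ℰ` (only nonzero entry: `(3,3)` entry equal to `−k_v/τ`). -/
noncomputable def matE (τ kv : ℝ) : Matrix (Fin 3) (Fin 3) ℝ :=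
  !![0, 0, 0;
     0, 0, 0;
     0, 0, -kv / τ]

/-- The matrix `𝒟` (only its third row is nonzero). -/
noncomputable def matD (τ h kp kv : ℝ) : Matrix (Fin 3) (Fin 3) ℝ :=
  !![0, 0, 0;
     0, 0, 0;
     kp * (1 + kv * h) / τ ^ 2, (kv + kv ^ 2 * h - kp * τ) / τ ^ 2,
       (kp * h * τ + kv * τ - 2 * kv * h - kv ^ 2 * h ^ 2 - 1) / τ ^ 2]

/-- `Ψ₁₁`: block lower-bidiagonal with `𝒜` on the diagonal and `ℬ` on the first
subdiagonal. -/
noncomputable def psi11 (N : ℕ) (τ h kp kv : ℝ) :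
    Matrix (Fin N × Fin 3) (Fin N × Fin 3) ℝ := fun p q =>
  if p.1 = q.1 then matA τ h kp kv p.2 q.2
  else if (p.1 : ℕ) = (q.1 : ℕ) + 1 then matB p.2 q.2
  else 0

/-- `Ψ₂₂`: block diagonal with `N` copies of `ℋ`. -/
def psi22 (N : ℕ) (β₁ β₂ β₃ : ℝ) :
    Matrix (Fin N × Fin 3) (Fin N × Fin 3) ℝ := fun p q =>
  if p.1 = q.1 then matH β₁ β₂ β₃ p.2 q.2 else 0

/-- `Ψ₂₁`: block lower-triangular with zero diagonal blocks, `𝒟` on the first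
subdiagonal and `ℰ` on the second subdiagonal. -/
noncomputable def psi21 (N : ℕ) (τ h kp kv : ℝ) :
    Matrix (Fin N × Fin 3) (Fin N × Fin 3) ℝ := fun p q =>
  if (p.1 : ℕ) = (q.1 : ℕ) + 1 then matD τ h kp kv p.2 q.2
  else if (p.1 : ℕ) = (q.1 : ℕ) + 2 then matE τ kv p.2 q.2
  else 0

/-- The index identification `(Fin N × Fin 3) ⊕ (Fin N × Fin 3) ≃ Fin (6N)`. -/
def psiIndexEquiv (N : ℕ) : (Fin N × Fin 3) ⊕ (Fin N × Fin 3) ≃ Fin (6 * N) :=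
  ((finProdFinEquiv.sumCongr finProdFinEquiv).trans finSumFinEquiv).trans
    (finCongr (by omega))

/-- The `6N × 6N` closed-loop matrix `Ψ = [[Ψ₁₁, O], [Ψ₂₁, Ψ₂₂]]`. -/
noncomputable def Psi (N : ℕ) (τ h kp kv β₁ β₂ β₃ : ℝ) :
    Matrix (Fin (6 * N)) (Fin (6 * N)) ℝ :=
  Matrix.reindex (psiIndexEquiv N) (psiIndexEquiv N)
    (Matrix.fromBlocks (psi11 N τ h kp kv) 0 (psi21 N τ h kp kv) (psi22 N β₁ β₂ β₃))

/-- Condition (h3) of the paper. -/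
def condH3 (τ h kp kv : ℝ) : Prop :=
  if h < τ then
    kv > (Real.sqrt ((1 - kp * h ^ 2) ^ 2 + 4 * kp * h * τ) - (1 + kp * h ^ 2)) / (2 * h)
  else
    kv > 0

/-- Routh–Hurwitz criterion for a cubic `t μ³ + a μ² + b μ + c` with positive
coefficients and `t c < a b`: every complex root has negative real part. -/
lemma cubic_hurwitz (t a b c : ℝ) (ht : 0 < t) (ha : 0 < a) (hb : 0 < b) (hc : 0 < c)
    (habc : t * c < a * b) (μ : ℂ)
    (hr : (t : ℂ) * μ ^ 3 + a * μ ^ 2 + b * μ + c = 0) : μ.re < 0 := by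
  by_contra hx
  push_neg at hx
  set x := μ.re with hxdef
  set y := μ.im with hydef
  have h1 : t * (x ^ 3 - 3 * x * y ^ 2) + a * (x ^ 2 - y ^ 2) + b * x + c = 0 := by
    have := congrArg Complex.re hr
    simp [pow_succ, Complex.add_re, Complex.mul_re, Complex.mul_im, Complex.ofReal_re,
      Complex.ofReal_im] at this
    nlinarith [this]
  have h2 : y * (t * (3 * x ^ 2 - y ^ 2) + 2 * a * x + b) = 0 := by
    have := congrArg Complex.im hr
    simp [pow_succ, Complex.add_im, Complex.mul_re, Complex.mul_im, Complex.ofReal_re,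
      Complex.ofReal_im] at this
    nlinarith [this]
  rcases mul_eq_zero.mp h2 with hy | h2'
  · rw [hy] at h1
    nlinarith [mul_nonneg (mul_nonneg hx hx) hx, mul_nonneg hx hx]
  · have hy2 : t * y ^ 2 = 3 * t * x ^ 2 + 2 * a * x + b := by nlinarith [h2']
    nlinarith [mul_nonneg (mul_nonneg hx hx) hx, mul_nonneg hx hx, mul_pos ht ht,
      mul_nonneg (mul_nonneg ht.le hx) hx, mul_nonneg ht.le hx,
      mul_nonneg (mul_nonneg ha.le hx) hx, mul_nonneg hb.le hx,
      mul_nonneg (mul_nonneg ha.le ha.le) hx,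
      mul_nonneg (mul_nonneg (mul_nonneg ht.le ht.le) hx) (mul_nonneg hx hx)]

/-- The fiber of `Prod.fst` over `i` is equivalent to `Fin 3`. -/
def fiberEquiv {N : ℕ} (i : Fin N) : Fin 3 ≃ {a : Fin N × Fin 3 // (a.1 : ℕ) = (i : ℕ)} :=
  { toFun := fun j => ⟨(i, j), rfl⟩
    invFun := fun a => a.1.2
    left_inv := fun j => rfl
    right_inv := by
      rintro ⟨⟨i', j⟩, h⟩
      have : i' = i := Fin.val_injective h
      subst this; rfl }

/-- If a block lower-triangular matrix with constant diagonal block `C` has zero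
determinant, so does `C`. -/
lemma det_block_lower {N : ℕ} (M : Matrix (Fin N × Fin 3) (Fin N × Fin 3) ℂ)
    (C : Matrix (Fin 3) (Fin 3) ℂ)
    (htri : ∀ p q : Fin N × Fin 3, (p.1 : ℕ) < (q.1 : ℕ) → M p q = 0)
    (hdiag : ∀ (i : Fin N) (j j' : Fin 3), M (i, j) (i, j') = C j j')
    (hdet : M.det = 0) : C.det = 0 := by
  classical
  set b : Fin N × Fin 3 → ℕ := fun p => (p.1 : ℕ) with hb
  have hbt : Mᵀ.BlockTriangular b := by
    intro p q hlt
    exact htri q p hlt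
  have hprod : (0 : ℂ) = ∏ k ∈ Finset.image b Finset.univ, (Mᵀ.toSquareBlock b k).det := by
    rw [← hbt.det, Matrix.det_transpose, hdet]
  obtain ⟨k, hk, hkz⟩ := Finset.prod_eq_zero_iff.mp hprod.symm
  obtain ⟨p, -, hp⟩ := Finset.mem_image.mp hk
  set i := p.1 with hi
  have hik : ((i : ℕ)) = k := hp
  subst hik
  have hsub : (Mᵀ.toSquareBlock b (i : ℕ)).submatrix (fiberEquiv i) (fiberEquiv i) = Cᵀ := by
    ext j j'
    simp only [Matrix.toSquareBlock_def, Matrix.submatrix_apply, Matrix.transpose_apply,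
      Matrix.of_apply, fiberEquiv, Equiv.coe_fn_mk]
    exact hdiag i j' j
  rw [← Matrix.det_transpose C, ← hsub, Matrix.det_submatrix_equiv_self]
  exact hkz

/-- Under the stated parameter conditions, every (complex) eigenvalue of the
`6N × 6N` real matrix `Ψ` has negative real part. -/
theorem Psi_eigenvalues_neg_re (N : ℕ) (hN : 1 ≤ N) (τ h kp kv β₁ β₂ β₃ : ℝ)
    (hτ : 0 < τ) (hh : 0 < h) (hkp : 0 < kp)
    (hβ₁ : 0 < β₁) (hβ₃ : 0 < β₃) (hβ : 0 < β₁ * β₂ - β₃)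
    (hkv : condH3 τ h kp kv) :
    ∀ μ ∈ spectrum ℂ ((Psi N τ h kp kv β₁ β₂ β₃).map Complex.ofReal), μ.re < 0 := by
  intro μ hμ
  -- consequences of condition (h3)
  obtain ⟨hkv0, hkey⟩ : 0 < kv ∧ kp * τ < (1 + kv * h) * (kv + kp * h) := by
    unfold condH3 at hkv
    by_cases hhτ : h < τ
    · rw [if_pos hhτ] at hkv
      set s := Real.sqrt ((1 - kp * h ^ 2) ^ 2 + 4 * kp * h * τ) with hs
      have hs0 : 0 ≤ s := Real.sqrt_nonneg _
      have hs2 : s ^ 2 = (1 - kp * h ^ 2) ^ 2 + 4 * kp * h * τ := by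
        rw [hs]
        exact Real.sq_sqrt (by nlinarith [sq_nonneg (1 - kp * h ^ 2), mul_pos (mul_pos hkp hh) hτ])
      have hsgt : 1 + kp * h ^ 2 < s := by
        rw [hs]
        rw [show (1 + kp * h ^ 2 < Real.sqrt ((1 - kp * h ^ 2) ^ 2 + 4 * kp * h * τ)) ↔ _ from
          Real.lt_sqrt (by positivity)]
        nlinarith [mul_pos (mul_pos hkp hh) (sub_pos.mpr hhτ)]
      have hkv' : (s - (1 + kp * h ^ 2)) / (2 * h) < kv := hkv
      have hkv0 : 0 < kv := lt_trans (div_pos (by linarith) (by positivity)) hkv'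
      have hmul : s - (1 + kp * h ^ 2) < kv * (2 * h) := (div_lt_iff₀ (by positivity)).mp hkv'
      have hsq : s ^ 2 < (2 * h * kv + (1 + kp * h ^ 2)) ^ 2 := by nlinarith
      refine ⟨hkv0, ?_⟩
      nlinarith [hsq, hs2, mul_pos hh hkv0, mul_pos hh hkp, sq_nonneg (kp * h)]
    · rw [if_neg hhτ] at hkv
      push_neg at hhτ
      refine ⟨hkv, ?_⟩
      nlinarith [mul_le_mul_of_nonneg_left hhτ hkp.le, mul_pos (mul_pos hkv hkv) hh,
        mul_pos (mul_pos hkv hkp) (mul_pos hh hh), hkv]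
  have hβ₂ : 0 < β₂ := by nlinarith
  -- move to the block matrix on the sum type
  have key : (Psi N τ h kp kv β₁ β₂ β₃).map Complex.ofReal
      = Matrix.reindexAlgEquiv ℂ ℂ (psiIndexEquiv N)
          ((Matrix.fromBlocks (psi11 N τ h kp kv) 0 (psi21 N τ h kp kv)
            (psi22 N β₁ β₂ β₃)).map Complex.ofReal) := by
    ext p q
    simp [Psi, Matrix.reindexAlgEquiv_apply, Matrix.reindex_apply, Matrix.submatrix_apply,
      Matrix.map_apply]
  rw [key, AlgEquiv.spectrum_eq] at hμ
  -- the characteristic determinant vanishes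
  have hdet0 : ((algebraMap ℂ (Matrix ((Fin N × Fin 3) ⊕ (Fin N × Fin 3))
      ((Fin N × Fin 3) ⊕ (Fin N × Fin 3)) ℂ)) μ
      - (Matrix.fromBlocks (psi11 N τ h kp kv) 0 (psi21 N τ h kp kv)
          (psi22 N β₁ β₂ β₃)).map Complex.ofReal).det = 0 := by
    have hne := spectrum.mem_iff.mp hμ
    by_contra hne'
    exact hne ((Matrix.isUnit_iff_isUnit_det _).mpr (isUnit_iff_ne_zero.mpr hne'))
  have hblocks : ((algebraMap ℂ (Matrix ((Fin N × Fin 3) ⊕ (Fin N × Fin 3))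
      ((Fin N × Fin 3) ⊕ (Fin N × Fin 3)) ℂ)) μ
      - (Matrix.fromBlocks (psi11 N τ h kp kv) 0 (psi21 N τ h kp kv)
          (psi22 N β₁ β₂ β₃)).map Complex.ofReal)
      = Matrix.fromBlocks
          ((algebraMap ℂ (Matrix (Fin N × Fin 3) (Fin N × Fin 3) ℂ)) μ
            - (psi11 N τ h kp kv).map Complex.ofReal) 0
          (-(psi21 N τ h kp kv).map Complex.ofReal)
          ((algebraMap ℂ (Matrix (Fin N × Fin 3) (Fin N × Fin 3) ℂ)) μ
            - (psi22 N β₁ β₂ β₃).map Complex.ofReal) := by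
    ext p q
    rcases p with p | p <;> rcases q with q | q <;>
      simp [Matrix.algebraMap_matrix_apply, Matrix.map_apply]
  rw [hblocks, Matrix.det_fromBlocks_zero₁₂] at hdet0
  have hτ0 : (τ : ℂ) ≠ 0 := Complex.ofReal_ne_zero.mpr hτ.ne'
  rcases mul_eq_zero.mp hdet0 with h1 | h1
  · -- eigenvalue of 𝒜
    have hCA : ((algebraMap ℂ (Matrix (Fin 3) (Fin 3) ℂ)) μ
        - (matA τ h kp kv).map Complex.ofReal).det = 0 := by
      refine det_block_lower _ _ ?_ ?_ h1
      · intro p q hlt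
        have h2 : p.1 ≠ q.1 := fun e => absurd (congrArg Fin.val e) (Nat.ne_of_lt hlt)
        have h3 : p ≠ q := fun e => h2 (congrArg Prod.fst e)
        have h4 : (p.1 : ℕ) ≠ (q.1 : ℕ) + 1 := by omega
        simp [Matrix.algebraMap_matrix_apply, psi11, Matrix.map_apply, h2, h3, h4]
      · intro i j j'
        simp [Matrix.algebraMap_matrix_apply, psi11, Matrix.map_apply, Prod.mk.injEq]
    have hform : ((algebraMap ℂ (Matrix (Fin 3) (Fin 3) ℂ)) μ
        - (matA τ h kp kv).map Complex.ofReal).det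
        = μ ^ 3 + (((1 + kv * h) / τ : ℝ) : ℂ) * μ ^ 2
            + (((kv + kp * h) / τ : ℝ) : ℂ) * μ + ((kp / τ : ℝ) : ℂ) := by
      simp [Matrix.det_fin_three, Matrix.algebraMap_matrix_apply, matA, Matrix.map_apply,
        Matrix.vecHead, Matrix.vecTail]
      ring
    rw [hform] at hCA
    have hr : (τ : ℂ) * μ ^ 3 + ((1 + kv * h : ℝ) : ℂ) * μ ^ 2
        + ((kv + kp * h : ℝ) : ℂ) * μ + ((kp : ℝ) : ℂ) = 0 := by
      push_cast at hCA ⊢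
      field_simp at hCA
      linear_combination hCA
    exact cubic_hurwitz τ (1 + kv * h) (kv + kp * h) kp hτ (by positivity) (by positivity)
      hkp (by nlinarith) μ hr
  · -- eigenvalue of ℋ
    have hCH : ((algebraMap ℂ (Matrix (Fin 3) (Fin 3) ℂ)) μ
        - (matH β₁ β₂ β₃).map Complex.ofReal).det = 0 := by
      refine det_block_lower _ _ ?_ ?_ h1
      · intro p q hlt
        have h2 : p.1 ≠ q.1 := fun e => absurd (congrArg Fin.val e) (Nat.ne_of_lt hlt)
        have h3 : p ≠ q := fun e => h2 (congrArg Prod.fst e)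
        simp [Matrix.algebraMap_matrix_apply, psi22, Matrix.map_apply, h2, h3]
      · intro i j j'
        simp [Matrix.algebraMap_matrix_apply, psi22, Matrix.map_apply, Prod.mk.injEq]
    have hform : ((algebraMap ℂ (Matrix (Fin 3) (Fin 3) ℂ)) μ
        - (matH β₁ β₂ β₃).map Complex.ofReal).det
        = μ ^ 3 + ((β₁ : ℝ) : ℂ) * μ ^ 2 + ((β₂ : ℝ) : ℂ) * μ + ((β₃ : ℝ) : ℂ) := by
      simp [Matrix.det_fin_three, Matrix.algebraMap_matrix_apply, matH, Matrix.map_apply,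
        Matrix.vecHead, Matrix.vecTail]
      ring
    rw [hform] at hCH
    have hr : ((1 : ℝ) : ℂ) * μ ^ 3 + ((β₁ : ℝ) : ℂ) * μ ^ 2
        + ((β₂ : ℝ) : ℂ) * μ + ((β₃ : ℝ) : ℂ) = 0 := by
      push_cast at hCH ⊢
      linear_combination hCH
    exact cubic_hurwitz 1 β₁ β₂ β₃ one_pos hβ₁ hβ₂ hβ₃ (by nlinarith) μ hr
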